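/- Let d ≥ 1, Θ > 0, v_max > 0, ω_min > 0, ε > 0, let E : ℝ^d → ℝ^d be measurable with G := sup_x |E(x)| < ∞, and set C₂ := G v_max/Θ and C₁ := C₂²/ω_min. Let f : ℝ^d × ℝ^d → ℝ be measurable with ‖f‖_{M⁻¹}² < ∞, f(x,·) integrable for a.e. x, and f(x,v) = 0 whenever |v| > v_max; set ρ(x) = ∫_{ℝ^d} f(x,v) dv and g = f − M_Θ ρ, and assume ‖g‖_{M⁻¹}² < ∞ and the relevant integrals are absolutely convergent. If ε ≤ ω_min / C₂, then | ∫_{ℝ^d} E(x) · ( ∫_{|v|≤v_max} (v/Θ) g(x,v)² M_Θ(v)^{−1} dv + 2 ρ(x) ∫_{|v|≤v_max} (v/Θ) g(x,v) dv ) dx | ≤ C₁ ε ‖f‖_{M⁻¹}² + ( C₂ + ω_min/ε ) ‖g‖_{M⁻¹}². -/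

import Mathlib

open MeasureTheory Real

abbrev Euc (d : ℕ) := EuclideanSpace ℝ (Fin d)

/-- The Maxwellian with temperature `Θ` in dimension `d`. -/
noncomputable def maxwellian (d : ℕ) (Θ : ℝ) (v : Euc d) : ℝ :=
  (2 * Real.pi * Θ) ^ (-(d : ℝ) / 2) * Real.exp (-‖v‖ ^ 2 / (2 * Θ))

/-- The squared weighted norm `‖f‖_{M⁻¹}²`. -/
noncomputable def wnormSq (d : ℕ) (Θ : ℝ) (f : Euc d → Euc d → ℝ) : ℝ :=
  ∫ x, ∫ v, (f x v) ^ 2 / maxwellian d Θ v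

/-!
Fix `x` and let `q = ∫ g² / M`. On the ball `‖v‖ ≤ vmax`, `‖∫ (g² / (Θ M)) v‖ ≤ (vmax / Θ) q`
and `‖∫ (g / Θ) v‖ ≤ (vmax / Θ) ∫ |g| ≤ (vmax / Θ) √q`, the last step by Cauchy–Schwarz against
the Maxwellian, whose mass is `1`. The same Cauchy–Schwarz gives `ρ² ≤ ∫ f² / M`, and Young's
inequality `2 C₂ |ρ| √q ≤ C₁ ε ρ² + (ωmin / ε) q` absorbs the cross term. Integrating in `x`
concludes.
-/

section Maxwellian

variable {d : ℕ} {Θ : ℝ}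

lemma maxwellian_pos (hΘ : 0 < Θ) (v : Euc d) : 0 < maxwellian d Θ v := by
  have hbase : 0 < 2 * π * Θ := by positivity
  unfold maxwellian
  positivity

lemma integral_maxwellian (hΘ : 0 < Θ) : ∫ v, maxwellian d Θ v = 1 := by
  have hgauss := GaussianFourier.integral_rexp_neg_mul_sq_norm (V := Euc d)
    (inv_pos.2 (mul_pos two_pos hΘ))
  rw [finrank_euclideanSpace_fin, div_inv_eq_mul, mul_left_comm, ← mul_assoc] at hgauss
  have hexp (v : Euc d) : -‖v‖ ^ 2 / (2 * Θ) = -(2 * Θ)⁻¹ * ‖v‖ ^ 2 := by ring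
  have hbase : 0 < 2 * π * Θ := by positivity
  simp_rw [maxwellian, integral_const_mul, hexp, hgauss, ← rpow_add hbase]
  rw [neg_div, neg_add_cancel, rpow_zero]

lemma integrable_maxwellian (hΘ : 0 < Θ) : Integrable (maxwellian d Θ) :=
  .of_integral_ne_zero (by rw [integral_maxwellian hΘ]; exact one_ne_zero)

end Maxwellian

theorem sq_integral_abs_le_integral_sq_div_mul_integral {α : Type*} [MeasurableSpace α]
    {μ : Measure α} {u w : α → ℝ} (hw : ∀ x, 0 < w x) (hu : AEStronglyMeasurable u μ)
    (huw : Integrable (fun x => u x ^ 2 / w x) μ) (hwi : Integrable w μ) :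
    (∫ x, |u x| ∂μ) ^ 2 ≤ (∫ x, u x ^ 2 / w x ∂μ) * ∫ x, w x ∂μ := by
  have hsqrt_pos (x : α) : 0 < √(w x) := sqrt_pos.2 (hw x)
  have ha_sq (x : α) : (|u x| / √(w x)) ^ 2 = u x ^ 2 / w x := by
    rw [div_pow, sq_abs, sq_sqrt (hw x).le]
  have hb_sq (x : α) : √(w x) ^ 2 = w x := sq_sqrt (hw x).le
  have hab (x : α) : |u x| / √(w x) * √(w x) = |u x| := div_mul_cancel₀ _ (hsqrt_pos x).ne'
  have hbm : AEStronglyMeasurable (fun x => √(w x)) μ :=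
    continuous_sqrt.comp_aestronglyMeasurable hwi.1
  have ham : AEStronglyMeasurable (fun x => |u x| / √(w x)) μ :=
    (hu.aemeasurable.abs.div hbm.aemeasurable).aestronglyMeasurable
  have ha : MemLp (fun x => |u x| / √(w x)) (ENNReal.ofReal 2) μ := by
    rw [ENNReal.ofReal_ofNat, memLp_two_iff_integrable_sq ham]
    simpa only [ha_sq] using huw
  have hb : MemLp (fun x => √(w x)) (ENNReal.ofReal 2) μ := by
    rw [ENNReal.ofReal_ofNat, memLp_two_iff_integrable_sq hbm]
    simpa only [hb_sq] using hwi
  have hholder := integral_mul_le_Lp_mul_Lq_of_nonneg HolderConjugate.two_two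
    (.of_forall fun x => div_nonneg (abs_nonneg _) (hsqrt_pos x).le)
    (.of_forall fun x => (hsqrt_pos x).le) ha hb
  simp only [hab, rpow_two, ha_sq, hb_sq, ← sqrt_eq_rpow] at hholder
  have hX : 0 ≤ ∫ x, u x ^ 2 / w x ∂μ :=
    integral_nonneg fun x => div_nonneg (sq_nonneg _) (hw x).le
  have hY : 0 ≤ ∫ x, w x ∂μ := integral_nonneg fun x => (hw x).le
  calc (∫ x, |u x| ∂μ) ^ 2
      ≤ (√(∫ x, u x ^ 2 / w x ∂μ) * √(∫ x, w x ∂μ)) ^ 2 :=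
        pow_le_pow_left₀ (integral_nonneg fun x => abs_nonneg _) hholder 2
    _ = _ := by rw [mul_pow, sq_sqrt hX, sq_sqrt hY]

theorem norm_integral_smul_self_le {E : Type*} [NormedAddCommGroup E] [NormedSpace ℝ E]
    [MeasurableSpace E] {μ : Measure E} {c : E → ℝ} {R : ℝ} (hc : Integrable c μ)
    (hR : ∀ᵐ v ∂μ, ‖v‖ ≤ R) : ‖∫ v, c v • v ∂μ‖ ≤ R * ∫ v, |c v| ∂μ := by
  rw [← integral_const_mul]
  refine norm_integral_le_of_norm_le (hc.abs.const_mul R) ?_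
  filter_upwards [hR] with v hv
  rw [norm_smul, norm_eq_abs, mul_comm]
  exact mul_le_mul_of_nonneg_right hv (abs_nonneg _)

theorem two_mul_mul_le_young {c a b ω ε : ℝ} (hω : 0 < ω) (hε : 0 < ε) :
    2 * c * a * b ≤ c ^ 2 / ω * ε * a ^ 2 + ω / ε * b ^ 2 := by
  have key : c ^ 2 / ω * ε * a ^ 2 + ω / ε * b ^ 2 - 2 * c * a * b
      = (c * ε * a - ω * b) ^ 2 / (ω * ε) := by
    field_simp
    ring
  have : 0 ≤ (c * ε * a - ω * b) ^ 2 / (ω * ε) := by positivity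
  linarith

section VelocityMoments

variable {d : ℕ} {Θ : ℝ} {u : Euc d → ℝ}

lemma sq_setIntegral_abs_le_integral_sq_div_maxwellian (hΘ : 0 < Θ)
    (hu : AEStronglyMeasurable u) (hu2 : Integrable (fun v => u v ^ 2 / maxwellian d Θ v))
    (S : Set (Euc d)) :
    (∫ v in S, |u v|) ^ 2 ≤ ∫ v, u v ^ 2 / maxwellian d Θ v := by
  have hM := integrable_maxwellian (d := d) hΘ
  have hM_nonneg (v : Euc d) : 0 ≤ maxwellian d Θ v := (maxwellian_pos hΘ v).le
  have hu2_nonneg (v : Euc d) : 0 ≤ u v ^ 2 / maxwellian d Θ v :=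
    div_nonneg (sq_nonneg _) (hM_nonneg v)
  calc (∫ v in S, |u v|) ^ 2
      ≤ (∫ v in S, u v ^ 2 / maxwellian d Θ v) * ∫ v in S, maxwellian d Θ v :=
        sq_integral_abs_le_integral_sq_div_mul_integral (maxwellian_pos hΘ) hu.restrict
          hu2.integrableOn hM.integrableOn
    _ ≤ (∫ v, u v ^ 2 / maxwellian d Θ v) * ∫ v, maxwellian d Θ v :=
        mul_le_mul (setIntegral_le_integral hu2 (.of_forall hu2_nonneg))
          (setIntegral_le_integral hM (.of_forall hM_nonneg)) (integral_nonneg hM_nonneg)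
          (integral_nonneg hu2_nonneg)
    _ = ∫ v, u v ^ 2 / maxwellian d Θ v := by rw [integral_maxwellian hΘ, mul_one]

lemma sq_integral_le_integral_sq_div_maxwellian (hΘ : 0 < Θ) (hu : AEStronglyMeasurable u)
    (hu2 : Integrable (fun v => u v ^ 2 / maxwellian d Θ v)) :
    (∫ v, u v) ^ 2 ≤ ∫ v, u v ^ 2 / maxwellian d Θ v := by
  have h := sq_setIntegral_abs_le_integral_sq_div_maxwellian hΘ hu hu2 Set.univ
  rw [setIntegral_univ] at h
  rw [← sq_abs]
  exact (pow_le_pow_left₀ (abs_nonneg _) abs_integral_le_integral_abs 2).trans h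

lemma ae_restrict_norm_le (R : ℝ) :
    ∀ᵐ v ∂(volume : Measure (Euc d)).restrict {v | ‖v‖ ≤ R}, ‖v‖ ≤ R :=
  ae_restrict_mem (measurableSet_le measurable_norm measurable_const)

lemma norm_setIntegral_sq_div_maxwellian_smul_le (hΘ : 0 < Θ) {R : ℝ} (hR : 0 ≤ R)
    (hu2 : Integrable (fun v => u v ^ 2 / maxwellian d Θ v)) :
    ‖∫ v in {v : Euc d | ‖v‖ ≤ R}, (u v ^ 2 / (Θ * maxwellian d Θ v)) • v‖
      ≤ R / Θ * ∫ v, u v ^ 2 / maxwellian d Θ v := by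
  have hdiv (v : Euc d) :
      u v ^ 2 / (Θ * maxwellian d Θ v) = u v ^ 2 / maxwellian d Θ v / Θ :=
    div_mul_eq_div_div_swap _ _ _
  have hnonneg (v : Euc d) : 0 ≤ u v ^ 2 / maxwellian d Θ v / Θ := by
    have := maxwellian_pos (d := d) hΘ v
    positivity
  simp only [hdiv]
  calc _ ≤ R * ∫ v in {v : Euc d | ‖v‖ ≤ R}, |u v ^ 2 / maxwellian d Θ v / Θ| :=
        norm_integral_smul_self_le (hu2.div_const Θ).integrableOn (ae_restrict_norm_le R)
    _ ≤ R * ∫ v, u v ^ 2 / maxwellian d Θ v / Θ := by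
        simp only [abs_of_nonneg (hnonneg _)]
        exact mul_le_mul_of_nonneg_left
          (setIntegral_le_integral (hu2.div_const Θ) (.of_forall hnonneg)) hR
    _ = R / Θ * ∫ v, u v ^ 2 / maxwellian d Θ v := by rw [integral_div]; ring

lemma norm_setIntegral_div_smul_le (hΘ : 0 < Θ) {R : ℝ} (hR : 0 ≤ R) (hu : Integrable u)
    (hu2 : Integrable (fun v => u v ^ 2 / maxwellian d Θ v)) :
    ‖∫ v in {v : Euc d | ‖v‖ ≤ R}, (u v / Θ) • v‖
      ≤ R / Θ * √(∫ v, u v ^ 2 / maxwellian d Θ v) := by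
  have hL1 : ∫ v in {v : Euc d | ‖v‖ ≤ R}, |u v| ≤ √(∫ v, u v ^ 2 / maxwellian d Θ v) :=
    le_sqrt_of_sq_le (sq_setIntegral_abs_le_integral_sq_div_maxwellian hΘ hu.1 hu2 _)
  calc _ ≤ R * ∫ v in {v : Euc d | ‖v‖ ≤ R}, |u v / Θ| :=
        norm_integral_smul_self_le (hu.div_const Θ).integrableOn (ae_restrict_norm_le R)
    _ = R / Θ * ∫ v in {v : Euc d | ‖v‖ ≤ R}, |u v| := by
        simp only [abs_div, abs_of_pos hΘ, integral_div]
        ring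
    _ ≤ R / Θ * √(∫ v, u v ^ 2 / maxwellian d Θ v) := by gcongr

end VelocityMoments

theorem abs_inner_add_smul_le {V : Type*} [NormedAddCommGroup V] [InnerProductSpace ℝ V]
    {e A B : V} {G K C r q F ω ε : ℝ} (he : ‖e‖ ≤ G) (hA : ‖A‖ ≤ K * q) (hB : ‖B‖ ≤ K * √q)
    (hC : G * K ≤ C) (hr : r ^ 2 ≤ F) (hq : 0 ≤ q) (hω : 0 < ω) (hε : 0 < ε) :
    |inner ℝ e (A + (2 * r) • B)| ≤ C ^ 2 / ω * ε * F + (C + ω / ε) * q := by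
  have hG : 0 ≤ G := (norm_nonneg e).trans he
  calc |inner ℝ e (A + (2 * r) • B)|
      ≤ G * (‖A‖ + 2 * |r| * ‖B‖) := by
        refine (abs_real_inner_le_norm _ _).trans ?_
        gcongr
        refine (norm_add_le _ _).trans_eq ?_
        rw [norm_smul, norm_mul, norm_two, norm_eq_abs, mul_assoc]
    _ ≤ G * (K * q + 2 * |r| * (K * √q)) := by gcongr
    _ = G * K * q + 2 * (G * K) * |r| * √q := by ring
    _ ≤ C * q + 2 * C * |r| * √q := by gcongr
    _ ≤ C * q + (C ^ 2 / ω * ε * |r| ^ 2 + ω / ε * √q ^ 2) := by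
        gcongr
        exact two_mul_mul_le_young hω hε
    _ ≤ C ^ 2 / ω * ε * F + (C + ω / ε) * q := by
        rw [sq_abs, sq_sqrt hq]
        have : C ^ 2 / ω * ε * r ^ 2 ≤ C ^ 2 / ω * ε * F := by gcongr
        linarith

theorem drift_term_case2_bound_general
    (d : ℕ) (Θ vmax ωmin ε G C₁ C₂ : ℝ)
    (hΘ : 0 < Θ) (hvmax : 0 < vmax) (hωmin : 0 < ωmin) (hε : 0 < ε)
    (hC₂ : C₂ = G * vmax / Θ) (hC₁ : C₁ = C₂ ^ 2 / ωmin)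
    (E : Euc d → Euc d) (hG : ∀ x, ‖E x‖ ≤ G)
    (f : Euc d → Euc d → ℝ)
    (hffin : Integrable (fun p : Euc d × Euc d => (f p.1 p.2) ^ 2 / maxwellian d Θ p.2))
    (hintv : ∀ᵐ x : Euc d, Integrable (f x))
    (ρ : Euc d → ℝ) (hρ : ∀ x, ρ x = ∫ v, f x v)
    (g : Euc d → Euc d → ℝ) (hg : ∀ x v, g x v = f x v - maxwellian d Θ v * ρ x)
    (hgfin : Integrable (fun p : Euc d × Euc d => (g p.1 p.2) ^ 2 / maxwellian d Θ p.2))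
    (hconv : Integrable (fun x => (inner ℝ (E x)
        ((∫ v in {v : Euc d | ‖v‖ ≤ vmax}, ((g x v) ^ 2 / (Θ * maxwellian d Θ v)) • v)
          + (2 * ρ x) • ∫ v in {v : Euc d | ‖v‖ ≤ vmax}, (g x v / Θ) • v) : ℝ))) :
    |∫ x, (inner ℝ (E x)
        ((∫ v in {v : Euc d | ‖v‖ ≤ vmax}, ((g x v) ^ 2 / (Θ * maxwellian d Θ v)) • v)
          + (2 * ρ x) • ∫ v in {v : Euc d | ‖v‖ ≤ vmax}, (g x v / Θ) • v) : ℝ)|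
      ≤ C₁ * ε * wnormSq d Θ f + (C₂ + ωmin / ε) * wnormSq d Θ g := by
  subst hC₁
  have hf2 : Integrable fun x => ∫ v, f x v ^ 2 / maxwellian d Θ v := hffin.integral_prod_left
  have hg2 : Integrable fun x => ∫ v, g x v ^ 2 / maxwellian d Θ v := hgfin.integral_prod_left
  have hbound : Integrable fun x => C₂ ^ 2 / ωmin * ε * (∫ v, f x v ^ 2 / maxwellian d Θ v)
      + (C₂ + ωmin / ε) * ∫ v, g x v ^ 2 / maxwellian d Θ v :=
    (hf2.const_mul _).add (hg2.const_mul _)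
  refine abs_integral_le_integral_abs.trans
    ((integral_mono_ae hconv.abs hbound ?_).trans_eq ?_)
  · filter_upwards [hintv, hffin.prod_right_ae, hgfin.prod_right_ae] with x hfx hfx2 hgx2
    have hgx : Integrable (g x) := (hfx.sub ((integrable_maxwellian hΘ).mul_const _)).congr
      (.of_forall fun v => (hg x v).symm)
    exact abs_inner_add_smul_le (hG x)
      (norm_setIntegral_sq_div_maxwellian_smul_le hΘ hvmax.le hgx2)
      (norm_setIntegral_div_smul_le hΘ hvmax.le hgx hgx2) (by rw [hC₂, mul_div_assoc])
      (hρ x ▸ sq_integral_le_integral_sq_div_maxwellian hΘ hfx.1 hfx2)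
      (integral_nonneg fun v => div_nonneg (sq_nonneg _) (maxwellian_pos hΘ v).le) hωmin hε
  · rw [integral_add (hf2.const_mul _) (hg2.const_mul _), integral_const_mul, integral_const_mul,
      wnormSq, wnormSq]

/-- Case 2 estimate (equation (2.11)) in the proof of Theorem 2.1. -/
theorem drift_term_case2_bound
    (d : ℕ) (hd : 1 ≤ d) (Θ vmax ωmin ε G C₁ C₂ : ℝ)
    (hΘ : 0 < Θ) (hvmax : 0 < vmax) (hωmin : 0 < ωmin) (hε : 0 < ε)
    (hC₂ : C₂ = G * vmax / Θ) (hC₁ : C₁ = C₂ ^ 2 / ωmin)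
    (E : Euc d → Euc d) (hEmeas : Measurable E) (hG : ∀ x, ‖E x‖ ≤ G)
    (f : Euc d → Euc d → ℝ)
    (hmeas : Measurable (fun p : Euc d × Euc d => f p.1 p.2))
    (hffin : Integrable (fun p : Euc d × Euc d => (f p.1 p.2) ^ 2 / maxwellian d Θ p.2))
    (hintv : ∀ᵐ x : Euc d, Integrable (f x))
    (hsupp : ∀ x v, vmax < ‖v‖ → f x v = 0)
    (ρ : Euc d → ℝ) (hρ : ∀ x, ρ x = ∫ v, f x v)
    (g : Euc d → Euc d → ℝ) (hg : ∀ x v, g x v = f x v - maxwellian d Θ v * ρ x)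
    (hgfin : Integrable (fun p : Euc d × Euc d => (g p.1 p.2) ^ 2 / maxwellian d Θ p.2))
    (hconv : Integrable (fun x => (inner ℝ (E x)
        ((∫ v in {v : Euc d | ‖v‖ ≤ vmax}, ((g x v) ^ 2 / (Θ * maxwellian d Θ v)) • v)
          + (2 * ρ x) • ∫ v in {v : Euc d | ‖v‖ ≤ vmax}, (g x v / Θ) • v) : ℝ)))
    (hεsmall : ε ≤ ωmin / C₂) :
    |∫ x, (inner ℝ (E x)
        ((∫ v in {v : Euc d | ‖v‖ ≤ vmax}, ((g x v) ^ 2 / (Θ * maxwellian d Θ v)) • v)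
          + (2 * ρ x) • ∫ v in {v : Euc d | ‖v‖ ≤ vmax}, (g x v / Θ) • v) : ℝ)|
      ≤ C₁ * ε * wnormSq d Θ f + (C₂ + ωmin / ε) * wnormSq d Θ g :=
  drift_term_case2_bound_general d Θ vmax ωmin ε G C₁ C₂ hΘ hvmax hωmin hε hC₂ hC₁ E hG f hffin
    hintv ρ hρ g hg hgfin hconv
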